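/- Let F, Φ : ℝ → ℝ be differentiable at ȳ₀ ∈ ℝ, and define the map Q : ℝ³ → ℝ³ by Q(ξ) = e^{Φ(Cξ) A} (ξ + F(Cξ) B). Let X ∈ ℝ³ satisfy CX = ȳ₀, set T = Φ(ȳ₀) and λ = F(ȳ₀), and assume the fixed-point relation X = e^{TA}(X + λB). Then Q is Fréchet differentiable at X, and its derivative is the linear map h ↦ e^{TA} h + (C h) · (F′(ȳ₀) · e^{TA} B + Φ′(ȳ₀) · A X); equivalently, the Jacobian of Q at X equals e^{TA} + K C with K = F′(ȳ₀) e^{TA} B + Φ′(ȳ₀) A X. -/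

import Mathlib

/-!
`Q` is the product of the matrix-valued map `ξ ↦ e^{Φ(Cξ)A}`, whose derivative comes from
`d/dt e^{tA} = A e^{tA}` and the chain rule, with the affine map `ξ ↦ ξ + F(Cξ)B`. The product rule
gives the derivative `h ↦ e^{TA}h + (Ch)(F′ e^{TA}B + Φ′ A e^{TA}(X + λB))`, and at the fixed point
`e^{TA}(X + λB) = X` the last term is `Φ′ A X`.
-/

open Matrix

/-- The system matrix of the third-order PK model. -/
noncomputable def Amat (a₁ a₂ a₃ g₁ g₂ : ℝ) : Matrix (Fin 3) (Fin 3) ℝ :=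
  !![-a₁, 0, 0; g₁, -a₂, 0; 0, g₂, -a₃]

/-- The input vector `B = (1,0,0)ᵀ`. -/
noncomputable def Bvec : Fin 3 → ℝ := ![1, 0, 0]

/-- The output map `C x = x₃`. -/
noncomputable def Cout (x : Fin 3 → ℝ) : ℝ := x 2

/-- `ξ_T(τ) = C e^{τA} (I − e^{TA})⁻¹ B`, the output at phase `τ` of the 1-cycle
with unit dose and inter-dose interval `T`. -/
noncomputable def xi (a₁ a₂ a₃ g₁ g₂ : ℝ) (T τ : ℝ) : ℝ :=
  Cout ((NormedSpace.exp (τ • Amat a₁ a₂ a₃ g₁ g₂) *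
    (1 - NormedSpace.exp (T • Amat a₁ a₂ a₃ g₁ g₂))⁻¹).mulVec Bvec)

open scoped Matrix.Norms.Operator

section

variable {𝕜 : Type*} [NontriviallyNormedField 𝕜] {m n : Type*} [Fintype m] [Fintype n]
  {E : Type*} [NormedAddCommGroup E] [NormedSpace 𝕜 E]

theorem Matrix.isBoundedBilinearMap_mulVec :
    IsBoundedBilinearMap 𝕜 fun p : Matrix m n 𝕜 × (n → 𝕜) => p.1 *ᵥ p.2 where
  add_left := add_mulVec
  smul_left := smul_mulVec
  add_right := mulVec_add
  smul_right c M v := mulVec_smul M c v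
  bound := ⟨1, one_pos, fun M v => by simpa using linfty_opNorm_mulVec M v⟩

theorem HasDerivAt.hasFDerivAt_comp_mulVec [CompleteSpace 𝕜] {M : 𝕜 → Matrix m n 𝕜}
    {M' : Matrix m n 𝕜} {g : E → 𝕜} {g' : E →L[𝕜] 𝕜} {u : E → n → 𝕜} {u' : E →L[𝕜] n → 𝕜} {x : E}
    (hM : HasDerivAt M M' (g x)) (hg : HasFDerivAt g g' x) (hu : HasFDerivAt u u' x) :
    HasFDerivAt (fun y => M (g y) *ᵥ u y)
      ((M (g x)).mulVecLin.toContinuousLinearMap.comp u' + g'.smulRight (M' *ᵥ u x)) x := by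
  refine ((isBoundedBilinearMap_mulVec.hasFDerivAt (M (g x), u x)).comp x
    ((hM.hasFDerivAt.comp x hg).prodMk hu)).congr_fderiv ?_
  ext1 h
  -- the scoped matrix-norm instances keep the simp lemmas for `deriv` and `comp` from firing
  change M (g x) *ᵥ u' h + (g' h • M') *ᵥ u x = _
  rw [smul_mulVec]
  rfl

end

theorem hasFDerivAt_exp_smul_mulVec_add {𝕜 : Type*} [RCLike 𝕜] {n : Type*} [Fintype n]
    [DecidableEq n] (A : Matrix n n 𝕜) (b : n → 𝕜) (c : (n → 𝕜) →L[𝕜] 𝕜) {f φ : 𝕜 → 𝕜}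
    {f' φ' : 𝕜} {x : n → 𝕜}
    (hf : HasDerivAt f f' (c x)) (hφ : HasDerivAt φ φ' (c x)) :
    HasFDerivAt (fun ξ => NormedSpace.exp (φ (c ξ) • A) *ᵥ (ξ + f (c ξ) • b))
      ((NormedSpace.exp (φ (c x) • A)).mulVecLin.toContinuousLinearMap + c.smulRight
        (f' • NormedSpace.exp (φ (c x) • A) *ᵥ b +
          φ' • A *ᵥ NormedSpace.exp (φ (c x) • A) *ᵥ (x + f (c x) • b))) x := by
  have hu := (hasFDerivAt_id x).add ((hf.comp_hasFDerivAt x c.hasFDerivAt).smul_const b)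
  -- stated explicitly so that `A * _` is the plain matrix product, not the normed-ring one
  have hexp : HasDerivAt (fun t => NormedSpace.exp (t • A)) (A * NormedSpace.exp (φ (c x) • A))
      (φ (c x)) := hasDerivAt_exp_smul_const' A _
  refine (hexp.hasFDerivAt_comp_mulVec (g := φ ∘ c)
    (hφ.comp_hasFDerivAt x c.hasFDerivAt) hu).congr_fderiv ?_
  ext1 h
  simp only [Function.comp_apply, Pi.add_apply, id_eq, ContinuousLinearMap.comp_add,
    ContinuousLinearMap.comp_id, mulVec_add, mulVec_smul, _root_.add_apply,
    LinearMap.coe_toContinuousLinearMap', mulVecBilin_apply, ContinuousLinearMap.comp_apply,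
    ContinuousLinearMap.smulRight_apply, _root_.smul_apply, smul_eq_mul, map_smul, smul_add, mulVec_mulVec]
  module

theorem jacobian_of_Q_general
    (a₁ a₂ a₃ g₁ g₂ : ℝ)
    (F Φ : ℝ → ℝ) (ybar₀ : ℝ)
    (hF : DifferentiableAt ℝ F ybar₀) (hΦ : DifferentiableAt ℝ Φ ybar₀)
    (X : Fin 3 → ℝ) (hCX : Cout X = ybar₀)
    (hfix : X = (NormedSpace.exp (Φ ybar₀ • Amat a₁ a₂ a₃ g₁ g₂)).mulVec
      (X + F ybar₀ • Bvec)) :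
    HasFDerivAt
      (fun ξ : Fin 3 → ℝ =>
        (NormedSpace.exp (Φ (Cout ξ) • Amat a₁ a₂ a₃ g₁ g₂)).mulVec
          (ξ + F (Cout ξ) • Bvec))
      (LinearMap.toContinuousLinearMap
          (Matrix.mulVecLin (NormedSpace.exp (Φ ybar₀ • Amat a₁ a₂ a₃ g₁ g₂))) +
        (ContinuousLinearMap.proj 2 : (Fin 3 → ℝ) →L[ℝ] ℝ).smulRight
          (deriv F ybar₀ •
              (NormedSpace.exp (Φ ybar₀ • Amat a₁ a₂ a₃ g₁ g₂)).mulVec Bvec +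
            deriv Φ ybar₀ • (Amat a₁ a₂ a₃ g₁ g₂).mulVec X))
      X := by
  obtain rfl : (ContinuousLinearMap.proj 2 : (Fin 3 → ℝ) →L[ℝ] ℝ) X = ybar₀ := hCX
  have hQ := hasFDerivAt_exp_smul_mulVec_add (Amat a₁ a₂ a₃ g₁ g₂) Bvec _
    hF.hasDerivAt hΦ.hasDerivAt
  rwa [← hfix] at hQ

/-- Differentiability of the Poincaré-type map `Q(ξ) = e^{Φ(Cξ)A}(ξ + F(Cξ)B)` at a
fixed point `X` with `CX = ȳ₀`, `T = Φ(ȳ₀)`, `λ = F(ȳ₀)`: the Fréchet derivative is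
`h ↦ e^{TA}h + (Ch)·(F′(ȳ₀)e^{TA}B + Φ′(ȳ₀)AX)`, i.e. the Jacobian is `e^{TA} + KC`. -/
theorem jacobian_of_Q
    (a₁ a₂ a₃ g₁ g₂ : ℝ)
    (ha₁ : 0 < a₁) (ha₂ : 0 < a₂) (ha₃ : 0 < a₃) (hg₁ : 0 < g₁) (hg₂ : 0 < g₂)
    (F Φ : ℝ → ℝ) (ybar₀ : ℝ)
    (hF : DifferentiableAt ℝ F ybar₀) (hΦ : DifferentiableAt ℝ Φ ybar₀)
    (X : Fin 3 → ℝ) (hCX : Cout X = ybar₀)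
    (hfix : X = (NormedSpace.exp (Φ ybar₀ • Amat a₁ a₂ a₃ g₁ g₂)).mulVec
      (X + F ybar₀ • Bvec)) :
    HasFDerivAt
      (fun ξ : Fin 3 → ℝ =>
        (NormedSpace.exp (Φ (Cout ξ) • Amat a₁ a₂ a₃ g₁ g₂)).mulVec
          (ξ + F (Cout ξ) • Bvec))
      (LinearMap.toContinuousLinearMap
          (Matrix.mulVecLin (NormedSpace.exp (Φ ybar₀ • Amat a₁ a₂ a₃ g₁ g₂))) +
        (ContinuousLinearMap.proj 2 : (Fin 3 → ℝ) →L[ℝ] ℝ).smulRight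
          (deriv F ybar₀ •
              (NormedSpace.exp (Φ ybar₀ • Amat a₁ a₂ a₃ g₁ g₂)).mulVec Bvec +
            deriv Φ ybar₀ • (Amat a₁ a₂ a₃ g₁ g₂).mulVec X))
      X :=
  jacobian_of_Q_general a₁ a₂ a₃ g₁ g₂ F Φ ybar₀ hF hΦ X hCX hfix
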